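/- arXiv:2008.10718 — 2 statements merged into one kernel-verified Lean document; each statement's English description precedes it below -/
import Mathlib

section
/- Let b be an integer with b ≡ 2 (mod 4), p a prime with p ≡ 1 (mod 4), and x, y, u, v integers with p = x² + (b²/4+1)y² = u² + v², u ≡ 1 (mod 4), the odd parts of x and y ≡ 1 (mod 4), and 4 ∣ v. If the conclusion Q(b) of Sun's Conjecture 4 (defined in the context) holds, then Q(−b) holds. -/
/-- The Lucas sequence `U_n(b,c)`: `U_0 = 0`, `U_1 = 1`,
`U_{n+1} = b·U_n − c·U_{n−1}`. -/
def lucasU (b c : ℤ) : ℕ → ℤ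
  | 0 => 0
  | 1 => 1
  | n + 2 => b * lucasU b c (n + 1) - c * lucasU b c n

/-- The Lucas sequence `V_n(b,c)`: `V_0 = 2`, `V_1 = b`,
`V_{n+1} = b·V_n − c·V_{n−1}`. -/
def lucasV (b c : ℤ) : ℕ → ℤ
  | 0 => 2
  | 1 => b
  | n + 2 => b * lucasV b c (n + 1) - c * lucasV b c n

/-- The odd part of an integer `m`, i.e. `m / 2^(v₂ m)`. -/
def oddPart (m : ℤ) : ℤ := m / 2 ^ padicValInt 2 m

/-- `2‖m`: `2` divides `m` but `4` does not. -/
def ExactlyTwo (m : ℤ) : Prop := 2 ∣ m ∧ ¬ (4 ∣ m)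

/-- The conclusion `Q(β)` of Sun's Conjecture 4, relative to fixed `p, x, y, v`. -/
def Conj4Concl (p : ℕ) (x y v β : ℤ) : Prop :=
  (ExactlyTwo y →
    (p : ℤ) ∣ lucasV β (-1) ((p - 1) / 4) ∧
      x * lucasU β (-1) ((p - 1) / 4) ≡
        (-1) ^ ((β + v - 2) / 4).natAbs * y [ZMOD (p : ℤ)]) ∧
  (4 ∣ y →
    (p : ℤ) ∣ lucasU β (-1) ((p - 1) / 4) ∧
      lucasV β (-1) ((p - 1) / 4) ≡ 2 * (-1) ^ ((y + v) / 4).natAbs [ZMOD (p : ℤ)])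

/-!
Replacing `b` by `-b` multiplies `U_n` by `(-1)^(n+1)` and `V_n` by `(-1)^n`. When `y` is even,
`p = x² + ((b/2)² + 1) y² ≡ 1 (mod 8)`, so `n = (p - 1)/4` is even: the divisibilities are
unchanged, `U_n` changes sign, and so does the sign `(-1)^((β + v - 2)/4)`, whose exponent moves
by the odd number `b/2`.
-/

lemma lucasU_neg (b c : ℤ) : ∀ n, lucasU (-b) c n = (-1) ^ (n + 1) * lucasU b c n
  | 0 => by simp [lucasU]
  | 1 => by simp [lucasU]
  | n + 2 => by
      rw [lucasU, lucasU, lucasU_neg b c (n + 1), lucasU_neg b c n]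
      ring

lemma lucasV_neg (b c : ℤ) : ∀ n, lucasV (-b) c n = (-1) ^ n * lucasV b c n
  | 0 => by simp [lucasV]
  | 1 => by simp [lucasV]
  | n + 2 => by
      rw [lucasV, lucasV, lucasV_neg b c (n + 1), lucasV_neg b c n]
      ring

lemma Int.neg_one_pow_natAbs_add_odd (a : ℤ) {m : ℤ} (hm : Odd m) :
    (-1 : ℤ) ^ (a + m).natAbs = -(-1) ^ a.natAbs := by
  rw [← Int.coe_negOnePow, ← Int.coe_negOnePow, Int.negOnePow_add, Int.negOnePow_odd m hm]
  simp

lemma Int.sq_emod_eight_of_odd {x : ℤ} (hx : Odd x) : x ^ 2 % 8 = 1 := by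
  obtain ⟨j, rfl⟩ := hx
  obtain ⟨r, hr⟩ := Int.even_mul_succ_self j
  have : (2 * j + 1) ^ 2 = 8 * r + 1 := by linear_combination 4 * hr
  omega

lemma eight_dvd_mul_sq_of_emod_four_eq_two {b y : ℤ} (hb : b % 4 = 2) (hy : 2 ∣ y) :
    8 ∣ (b ^ 2 / 4 + 1) * y ^ 2 := by
  obtain ⟨k, rfl⟩ : ∃ k, b = 4 * k + 2 := ⟨b / 4, by omega⟩
  obtain ⟨s, rfl⟩ := hy
  have hb2 : (4 * k + 2) ^ 2 / 4 = 4 * k ^ 2 + 4 * k + 1 := by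
    rw [show (4 * k + 2) ^ 2 = 4 * (4 * k ^ 2 + 4 * k + 1) by ring]
    exact Int.mul_ediv_cancel_left _ four_ne_zero
  exact ⟨(2 * k ^ 2 + 2 * k + 1) * s ^ 2, by rw [hb2]; ring⟩

lemma even_div_four_of_eq_sq_add_mul_sq {p : ℕ} {b x y : ℤ} (hp4 : p % 4 = 1) (hb : b % 4 = 2)
    (hpx : (p : ℤ) = x ^ 2 + (b ^ 2 / 4 + 1) * y ^ 2) (hy : 2 ∣ y) : Even ((p - 1) / 4) := by
  obtain ⟨t, ht⟩ := eight_dvd_mul_sq_of_emod_four_eq_two hb hy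
  rw [ht] at hpx
  have hx : Odd x := by
    refine (Int.odd_pow' two_ne_zero).mp (Int.odd_iff.mpr ?_)
    omega
  have := Int.sq_emod_eight_of_odd hx
  rw [Nat.even_iff]
  omega

theorem statement7_general (p : ℕ) (hp4 : p % 4 = 1)
    (b x y v : ℤ) (hb : b % 4 = 2)
    (hpx : (p : ℤ) = x ^ 2 + (b ^ 2 / 4 + 1) * y ^ 2)
    (hQ : Conj4Concl p x y v b) :
    Conj4Concl p x y v (-b) := by
  obtain ⟨hQ₁, hQ₂⟩ := hQ
  have hsign : (-1 : ℤ) ^ ((b + v - 2) / 4).natAbs = -(-1) ^ ((-b + v - 2) / 4).natAbs := by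
    rw [show (b + v - 2) / 4 = (-b + v - 2) / 4 + b / 2 by omega]
    exact Int.neg_one_pow_natAbs_add_odd _ (Int.odd_iff.mpr (by omega))
  refine ⟨fun hy => ?_, fun hy => ?_⟩
  · obtain ⟨hV, hU⟩ := hQ₁ hy
    have hn := even_div_four_of_eq_sq_add_mul_sq hp4 hb hpx hy.1
    rw [lucasV_neg, lucasU_neg, hn.neg_one_pow, hn.add_one.neg_one_pow, one_mul]
    rw [hsign] at hU
    exact ⟨hV, by simpa using hU.neg⟩
  · obtain ⟨hU, hV⟩ := hQ₂ hy
    have hn := even_div_four_of_eq_sq_add_mul_sq hp4 hb hpx (dvd_trans (by norm_num) hy)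
    rw [lucasV_neg, lucasU_neg, hn.neg_one_pow, one_mul]
    exact ⟨hU.mul_left _, hV⟩

theorem statement7 (p : ℕ) (hp : p.Prime) (hp4 : p % 4 = 1)
    (b x y u v : ℤ) (hb : b % 4 = 2)
    (hpx : (p : ℤ) = x ^ 2 + (b ^ 2 / 4 + 1) * y ^ 2)
    (hpu : (p : ℤ) = u ^ 2 + v ^ 2)
    (hu : u ≡ 1 [ZMOD 4])
    (hx : oddPart x ≡ 1 [ZMOD 4])
    (hy : oddPart y ≡ 1 [ZMOD 4])
    (hv : 4 ∣ v)
    (hQ : Conj4Concl p x y v b) :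
    Conj4Concl p x y v (-b) :=
  statement7_general p hp4 b x y v hb hpx hQ
end

section
/- Let b be an integer with b ≡ 2 (mod 4) and set d = b²/4 + 1, so that d ≡ 2 (mod 8) and d is not a square in ℚ₂. Let K = ℚ₂(√d) = ℚ₂[X]/(X² − d), with √d denoting the class of X, and let ε = b/2 + √d ∈ K. Then there exist ξ, η ∈ K with ξ² − 5·η² = ε, but there do NOT exist ξ, η ∈ K with ξ² − (1 + 2√d)·η² = ε. -/
/-!
Write `m = b/2` (odd) and `d = m² + 1 = 2e` with `e` odd.

For `5`: with `ξ = 1/2 + √d` one needs `(10η)² = 20m² - 20m + 25`, which is `≡ 1 (mod 8)` and hence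
a square in `ℤ₂` by Hensel's lemma.

For `1 + 2√d`: since `d` has odd valuation, `√d ∉ ℚ₂`, so `ξ = x + y√d`, `η = u + w√d` with
`x, y, u, w ∈ ℚ₂`, and comparing coordinates gives two quadratic equations over `ℚ₂`. Clearing
denominators yields a solution over `ℤ₂` of the homogenised equations with some coordinate odd,
whereas reducing them modulo `2`, `4` and `8` shows that all coordinates of a solution are even.
-/

section QuadraticCoordinates

variable {F K : Type*} [Field F] [Field K] [Algebra F K] {s : K}

lemma eq_zero_of_algebraMap_add_algebraMap_mul_eq_zero (hs : s ∉ Set.range (algebraMap F K))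
    {a b : F} (h : algebraMap F K a + algebraMap F K b * s = 0) : a = 0 ∧ b = 0 := by
  obtain rfl | hb := eq_or_ne b 0
  · simpa using h
  refine absurd ⟨-a / b, ?_⟩ hs
  rw [map_div₀, map_neg, div_eq_iff ((map_ne_zero _).2 hb)]
  linear_combination -h

lemma linearIndependent_one_of_notMem_range (hs : s ∉ Set.range (algebraMap F K)) :
    LinearIndependent F ![1, s] := by
  rw [LinearIndependent.pair_iff]
  intro a b h
  apply eq_zero_of_algebraMap_add_algebraMap_mul_eq_zero hs
  simpa [Algebra.smul_def] using h

lemma exists_eq_algebraMap_add_algebraMap_mul (hK : Module.finrank F K = 2)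
    (hs : s ∉ Set.range (algebraMap F K)) (z : K) :
    ∃ a b : F, z = algebraMap F K a + algebraMap F K b * s := by
  have hspan := (linearIndependent_one_of_notMem_range hs).span_eq_top_of_card_eq_finrank
    (by simp [hK])
  obtain ⟨c, hc⟩ := (Submodule.mem_span_range_iff_exists_fun F).1
    (hspan ▸ Submodule.mem_top (x := z))
  exact ⟨c 0, c 1, by simp [← hc, Fin.sum_univ_two, Algebra.smul_def]⟩

end QuadraticCoordinates

namespace PadicInt

@[simp, norm_cast]
lemma coe_ofNat {p : ℕ} [Fact p.Prime] (n : ℕ) [n.AtLeastTwo] :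
    ((ofNat(n) : ℤ_[p]) : ℚ_[p]) = ofNat(n) := rfl

lemma exists_coe_eq_mul_and_isUnit {p : ℕ} [Fact p.Prime] {ι : Type*} [Finite ι]
    (v : ι → ℚ_[p]) (hv : v ≠ 0) :
    ∃ c : ℚ_[p], ∃ V : ι → ℤ_[p], (∀ i, (V i : ℚ_[p]) = c * v i) ∧ ∃ i, IsUnit (V i) := by
  obtain ⟨j, hj⟩ := Function.ne_iff.1 hv
  have : Nonempty ι := ⟨j⟩
  obtain ⟨i, hi⟩ := Finite.exists_max (fun k => ‖v k‖)
  have hvi : v i ≠ 0 := norm_pos_iff.1 ((norm_pos_iff.2 hj).trans_le (hi j))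
  have hle (k : ι) : ‖(v i)⁻¹ * v k‖ ≤ 1 := by
    rw [norm_mul, norm_inv, inv_mul_le_one₀ (norm_pos_iff.2 hvi)]
    exact hi k
  refine ⟨(v i)⁻¹, fun k => (⟨_, hle k⟩ : ℤ_[p]), fun k => rfl, i, ?_⟩
  exact isUnit_iff.2 (by simp [hvi])

lemma two_dvd_iff_toZMod_eq_zero {x : ℤ_[2]} : 2 ∣ x ↔ toZMod x = 0 := by
  rw [← RingHom.mem_ker, ker_toZMod, maximalIdeal_eq_span_p, Ideal.mem_span_singleton,
    Nat.cast_ofNat]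

lemma not_two_dvd_iff_toZMod_eq_one {x : ℤ_[2]} : ¬ 2 ∣ x ↔ toZMod x = 1 := by
  rw [two_dvd_iff_toZMod_eq_zero]
  generalize toZMod x = r
  revert r; decide

lemma two_dvd_sub_iff_toZMod_eq {x y : ℤ_[2]} : 2 ∣ x - y ↔ toZMod x = toZMod y := by
  rw [two_dvd_iff_toZMod_eq_zero, map_sub, sub_eq_zero]

lemma two_dvd_intCast_iff {n : ℤ} : (2 : ℤ_[2]) ∣ (n : ℤ_[2]) ↔ 2 ∣ n := by
  rw [two_dvd_iff_toZMod_eq_zero, map_intCast, ZMod.intCast_zmod_eq_zero_iff_dvd,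
    Nat.cast_ofNat]

lemma prime_two : Prime (2 : ℤ_[2]) := by simpa using (prime_p : Prime ((2 : ℕ) : ℤ_[2]))

lemma not_isUnit_of_two_dvd {x : ℤ_[2]} (h : 2 ∣ x) : ¬ IsUnit x :=
  fun hx => prime_two.not_isUnit (isUnit_of_dvd_unit h hx)

lemma two_dvd_mul_add_one (x : ℤ_[2]) : 2 ∣ x * (x + 1) := by
  rw [two_dvd_iff_toZMod_eq_zero, map_mul, map_add, map_one]
  generalize toZMod x = r
  revert r; decide

lemma eight_dvd_sq_sub_one {x : ℤ_[2]} (hx : ¬ 2 ∣ x) : 8 ∣ x ^ 2 - 1 := by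
  obtain ⟨k, hk⟩ : 2 ∣ x - 1 := by
    rw [two_dvd_sub_iff_toZMod_eq, map_one, ← not_two_dvd_iff_toZMod_eq_one.1 hx]
  obtain ⟨l, hl⟩ := two_dvd_mul_add_one k
  exact ⟨l, by linear_combination (x + 2 * k + 1) * hk + 4 * hl⟩

open Polynomial in
lemma isSquare_of_eight_dvd_sub_one {c : ℤ_[2]} (hc : 8 ∣ c - 1) : IsSquare c := by
  obtain ⟨k, hk⟩ := hc
  have h2 : ‖(2 : ℤ_[2])‖ = 2⁻¹ := by simpa using norm_p (p := 2)
  have hnorm : ‖(X ^ 2 - C c : ℤ_[2][X]).aeval (1 : ℤ_[2])‖ <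
      ‖(X ^ 2 - C c : ℤ_[2][X]).derivative.aeval (1 : ℤ_[2])‖ ^ 2 := by
    have hval : (X ^ 2 - C c : ℤ_[2][X]).aeval (1 : ℤ_[2]) = -(2 ^ 3 * k) := by
      simp only [map_sub, map_pow, aeval_X, aeval_C, one_pow, Algebra.algebraMap_self,
        RingHom.id_apply]
      linear_combination -hk
    have hder : (X ^ 2 - C c : ℤ_[2][X]).derivative.aeval (1 : ℤ_[2]) = 2 := by
      norm_num
    rw [hval, hder, norm_neg, norm_mul, norm_pow, h2]
    calc (2⁻¹ : ℝ) ^ 3 * ‖k‖ ≤ 2⁻¹ ^ 3 := mul_le_of_le_one_right (by positivity) k.norm_le_one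
      _ < 2⁻¹ ^ 2 := by norm_num
  obtain ⟨z, hz, -⟩ := hensels_lemma hnorm
  exact ⟨z, by simpa [sub_eq_zero, sq, eq_comm] using hz⟩

lemma two_dvd_of_sq_eq_two_mul_mul_sq {e T C : ℤ_[2]} (he : ¬ 2 ∣ e)
    (h : T ^ 2 = 2 * e * C ^ 2) : 2 ∣ T ∧ 2 ∣ C := by
  obtain ⟨S, rfl⟩ : 2 ∣ T := prime_two.dvd_of_dvd_pow ⟨e * C ^ 2, by rw [h]; ring⟩
  have h' : e * C ^ 2 = 2 * S ^ 2 := mul_left_cancel₀ two_ne_zero (by linear_combination -h)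
  exact ⟨dvd_mul_right 2 S,
    prime_two.dvd_of_dvd_pow ((prime_two.dvd_or_dvd ⟨_, h'⟩).resolve_left he)⟩

lemma false_of_coeff_eqs_of_odd (e m a c Y W S : ℤ_[2]) (he : ¬ 2 ∣ e) (hm : ¬ 2 ∣ m)
    (hY : ¬ 2 ∣ Y) (hW : ¬ 2 ∣ W)
    (hA : (2 * a) ^ 2 - (2 * c) ^ 2 + 2 * e * (Y ^ 2 - W ^ 2) - 8 * e * (2 * c) * W =
      m * (2 * S) ^ 2)
    (hB : 2 * a * Y - 2 * c * W - (2 * c) ^ 2 - 2 * e * W ^ 2 = 2 * S ^ 2) : False := by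
  obtain ⟨y, hy⟩ := eight_dvd_sq_sub_one hY
  obtain ⟨w, hw⟩ := eight_dvd_sq_sub_one hW
  have hA' : a ^ 2 - c ^ 2 + 4 * e * (y - w) - 4 * e * c * W = m * S ^ 2 :=
    mul_left_cancel₀ (by norm_num : (4 : ℤ_[2]) ≠ 0)
      (by linear_combination hA - 2 * e * (hy - hw))
  have hB' : a * Y - c * W - 2 * c ^ 2 - e * W ^ 2 = S ^ 2 :=
    mul_left_cancel₀ two_ne_zero (by linear_combination hB)
  rw [not_two_dvd_iff_toZMod_eq_one] at he hm hY hW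
  have h1 := congrArg toZMod hA'
  have h2 := congrArg toZMod hB'
  simp only [map_add, map_sub, map_mul, map_pow, map_ofNat, he, hm, hY, hW, ZMod.pow_card]
    at h1 h2
  grind

/-- The coordinates of `ξ² - (1 + 2√d) η² = m + √d` in the basis `1, √d`, for `d = 2e`,
`ξ = X + Y√d`, `η = U + W√d`, homogenised by `T`. -/
theorem two_dvd_of_coeff_eqs (e m X Y U W T : ℤ_[2]) (he : ¬ 2 ∣ e) (hm : ¬ 2 ∣ m)
    (hA : X ^ 2 - U ^ 2 + 2 * e * (Y ^ 2 - W ^ 2) - 8 * e * U * W = m * T ^ 2)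
    (hB : 2 * (X * Y - U * W - U ^ 2 - 2 * e * W ^ 2) = T ^ 2) :
    2 ∣ X ∧ 2 ∣ Y ∧ 2 ∣ U ∧ 2 ∣ W ∧ 2 ∣ T := by
  have he₁ := not_two_dvd_iff_toZMod_eq_one.1 he
  obtain ⟨S, rfl⟩ : 2 ∣ T := prime_two.dvd_of_dvd_pow ⟨_, hB.symm⟩
  have hB' : X * Y - U * W - U ^ 2 - 2 * e * W ^ 2 = 2 * S ^ 2 :=
    mul_left_cancel₀ two_ne_zero (by linear_combination hB)
  obtain ⟨t, rfl⟩ : ∃ t, X = U + 2 * t := by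
    obtain ⟨t, ht⟩ : 2 ∣ X - U := by
      have h := congrArg toZMod hA
      simp only [map_add, map_sub, map_mul, map_pow, map_ofNat, ZMod.pow_card] at h
      exact two_dvd_sub_iff_toZMod_eq.2 (by grind)
    exact ⟨t, by linear_combination ht⟩
  obtain ⟨r, rfl⟩ : ∃ r, W = Y + 2 * r := by
    have hA' : 2 * (U * t + t ^ 2) + e * (Y ^ 2 - W ^ 2) - 4 * e * U * W = 2 * m * S ^ 2 :=
      mul_left_cancel₀ two_ne_zero (by linear_combination hA)
    obtain ⟨r, hr⟩ : 2 ∣ W - Y := by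
      have h := congrArg toZMod hA'
      simp only [map_add, map_sub, map_mul, map_pow, map_ofNat, ZMod.pow_card, he₁] at h
      exact two_dvd_sub_iff_toZMod_eq.2 (by grind)
    exact ⟨r, by linear_combination hr⟩
  obtain ⟨c, rfl⟩ : 2 ∣ U := by
    have h := congrArg toZMod hB'
    simp only [map_add, map_sub, map_mul, map_pow, map_ofNat, ZMod.pow_card] at h
    exact two_dvd_iff_toZMod_eq_zero.2 (by grind)
  have hX : 2 ∣ 2 * c + 2 * t := ⟨c + t, by ring⟩
  by_cases hY : 2 ∣ Y
  · exact ⟨hX, hY, dvd_mul_right 2 c, dvd_add hY (dvd_mul_right 2 r), dvd_mul_right 2 S⟩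
  · have hW : ¬ 2 ∣ Y + 2 * r := (dvd_add_left (dvd_mul_right 2 r)).not.2 hY
    exact (false_of_coeff_eqs_of_odd e m (c + t) c Y (Y + 2 * r) S he hm hY hW
      (by linear_combination hA) (by linear_combination hB')).elim

end PadicInt

namespace Padic

open PadicInt

lemma sq_ne_two_mul {e : ℤ_[2]} (he : ¬ 2 ∣ e) (t : ℚ_[2]) : t ^ 2 ≠ 2 * e := by
  intro h
  obtain ⟨c, V, hV, i, hi⟩ := exists_coe_eq_mul_and_isUnit ![t, 1] (by simp)
  have hsq : V 0 ^ 2 = 2 * e * V 1 ^ 2 := by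
    apply PadicInt.ext
    push_cast [hV]
    linear_combination c ^ 2 * h
  obtain ⟨h0, h1⟩ := two_dvd_of_sq_eq_two_mul_mul_sq he hsq
  fin_cases i
  · exact not_isUnit_of_two_dvd h0 hi
  · exact not_isUnit_of_two_dvd h1 hi

lemma not_coeff_eqs {e m : ℤ_[2]} (he : ¬ 2 ∣ e) (hm : ¬ 2 ∣ m) (x y u w : ℚ_[2])
    (h1 : x ^ 2 - u ^ 2 + 2 * e * (y ^ 2 - w ^ 2) - 8 * e * u * w = m)
    (h2 : 2 * (x * y - u * w - u ^ 2 - 2 * e * w ^ 2) = 1) : False := by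
  obtain ⟨c, V, hV, i, hi⟩ := exists_coe_eq_mul_and_isUnit ![x, y, u, w, 1] (by simp)
  have hA : V 0 ^ 2 - V 2 ^ 2 + 2 * e * (V 1 ^ 2 - V 3 ^ 2) - 8 * e * V 2 * V 3 =
      m * V 4 ^ 2 := by
    apply PadicInt.ext
    push_cast [hV, mul_one]
    linear_combination c ^ 2 * h1
  have hB : 2 * (V 0 * V 1 - V 2 * V 3 - V 2 ^ 2 - 2 * e * V 3 ^ 2) = V 4 ^ 2 := by
    apply PadicInt.ext
    push_cast [hV, mul_one]
    linear_combination c ^ 2 * h2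
  obtain ⟨h0, h1, h2, h3, h4⟩ := two_dvd_of_coeff_eqs e m _ _ _ _ _ he hm hA hB
  fin_cases i
  · exact not_isUnit_of_two_dvd h0 hi
  · exact not_isUnit_of_two_dvd h1 hi
  · exact not_isUnit_of_two_dvd h2 hi
  · exact not_isUnit_of_two_dvd h3 hi
  · exact not_isUnit_of_two_dvd h4 hi

end Padic

lemma exists_sq_sub_five_mul_sq_eq {K : Type*} [CommRing K] [Algebra ℚ_[2] K] (m : ℤ_[2])
    {s : K} (hs : s ^ 2 = algebraMap ℚ_[2] K (m ^ 2 + 1)) :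
    ∃ ξ η : K, ξ ^ 2 - 5 * η ^ 2 = algebraMap ℚ_[2] K m + s := by
  obtain ⟨l, hl⟩ := PadicInt.two_dvd_mul_add_one (m - 1)
  obtain ⟨r, hr⟩ := PadicInt.isSquare_of_eight_dvd_sub_one (c := 20 * m ^ 2 - 20 * m + 25)
    ⟨5 * l + 3, by linear_combination 20 * hl⟩
  have hr' : (2⁻¹ : ℚ_[2]) ^ 2 + (m ^ 2 + 1) - 5 * (r / 10) ^ 2 - m = 0 := by
    have := congrArg ((↑) : ℤ_[2] → ℚ_[2]) hr
    push_cast at this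
    linear_combination this / 20
  have h1 := congrArg (algebraMap ℚ_[2] K) hr'
  have h2 : algebraMap ℚ_[2] K (2 * 2⁻¹ - 1) = 0 := by norm_num
  refine ⟨algebraMap ℚ_[2] K 2⁻¹ + s, algebraMap ℚ_[2] K (r / 10), ?_⟩
  simp only [map_add, map_sub, map_mul, map_pow, map_ofNat, map_one, map_zero] at h1 h2 hs
  linear_combination hs + h1 + s * h2

lemma not_exists_sq_sub_one_add_two_mul_mul_sq_eq {K : Type*} [Field K] [Algebra ℚ_[2] K]
    (hK : Module.finrank ℚ_[2] K = 2) {e m : ℤ_[2]} (he : ¬ 2 ∣ e) (hm : ¬ 2 ∣ m) {s : K}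
    (hs : s ^ 2 = algebraMap ℚ_[2] K (2 * e)) :
    ¬ ∃ ξ η : K, ξ ^ 2 - (1 + 2 * s) * η ^ 2 = algebraMap ℚ_[2] K m + s := by
  rintro ⟨ξ, η, h⟩
  have hs' : s ∉ Set.range (algebraMap ℚ_[2] K) := by
    rintro ⟨t, rfl⟩
    exact Padic.sq_ne_two_mul he t ((algebraMap ℚ_[2] K).injective (by rw [map_pow, hs]))
  obtain ⟨x, y, rfl⟩ := exists_eq_algebraMap_add_algebraMap_mul hK hs' ξ
  obtain ⟨u, w, rfl⟩ := exists_eq_algebraMap_add_algebraMap_mul hK hs' η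
  obtain ⟨h1, h2⟩ := eq_zero_of_algebraMap_add_algebraMap_mul_eq_zero hs'
    (a := x ^ 2 - u ^ 2 + 2 * e * (y ^ 2 - w ^ 2) - 8 * e * u * w - m)
    (b := 2 * (x * y - u * w - u ^ 2 - 2 * e * w ^ 2) - 1) (by
      simp only [map_add, map_sub, map_mul, map_pow, map_ofNat, map_one] at h hs ⊢
      linear_combination h - (algebraMap ℚ_[2] K y ^ 2 - algebraMap ℚ_[2] K w ^ 2
        - 4 * algebraMap ℚ_[2] K u * algebraMap ℚ_[2] K w
        - 2 * algebraMap ℚ_[2] K w ^ 2 * s) * hs)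
  exact Padic.not_coeff_eqs he hm x y u w (by linear_combination h1) (by linear_combination h2)

theorem statement17 (b : ℤ) (hb : b % 4 = 2)
    (K : Type) [Field K] [Algebra ℚ_[2] K]
    (hrank : Module.finrank ℚ_[2] K = 2)
    (sqd : K)
    (hsqd : sqd ^ 2 = algebraMap ℚ_[2] K ((b ^ 2 / 4 + 1 : ℤ) : ℚ_[2])) :
    (∃ ξ η : K,
      ξ ^ 2 - 5 * η ^ 2 = algebraMap ℚ_[2] K ((b / 2 : ℤ) : ℚ_[2]) + sqd) ∧
    ¬ (∃ ξ η : K,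
      ξ ^ 2 - (1 + 2 * sqd) * η ^ 2 = algebraMap ℚ_[2] K ((b / 2 : ℤ) : ℚ_[2]) + sqd) := by
  obtain ⟨q, rfl⟩ : ∃ q, b = 4 * q + 2 := ⟨b / 4, by omega⟩
  have hhalf : (4 * q + 2) / 2 = 2 * q + 1 := by omega
  have hd : (4 * q + 2) ^ 2 / 4 + 1 = (2 * q + 1) ^ 2 + 1 := by
    rw [show (4 * q + 2) ^ 2 = 4 * (2 * q + 1) ^ 2 by ring,
      Int.mul_ediv_cancel_left _ four_ne_zero]
  rw [hhalf]
  rw [hd] at hsqd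
  have hm : ¬ (2 : ℤ_[2]) ∣ ((2 * q + 1 : ℤ) : ℤ_[2]) := by
    rw [PadicInt.two_dvd_intCast_iff]; omega
  have he : ¬ (2 : ℤ_[2]) ∣ ((2 * q ^ 2 + 2 * q + 1 : ℤ) : ℤ_[2]) := by
    rw [PadicInt.two_dvd_intCast_iff]; omega
  refine ⟨exists_sq_sub_five_mul_sq_eq ((2 * q + 1 : ℤ) : ℤ_[2]) ?_,
    not_exists_sq_sub_one_add_two_mul_mul_sq_eq hrank he hm ?_⟩
  · rw [hsqd, PadicInt.coe_intCast]; congr 1; push_cast; ring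
  · rw [hsqd, PadicInt.coe_intCast]; congr 1; push_cast; ring
end
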